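/- Let n ≥ 2 and let A ∈ ℝ^{n×n} be Metzler, invertible, and output unstable (its leading principal (n−1)×(n−1) submatrix A₁₁ is Hurwitz stable and A_{nn} > 0). Let b₀ ∈ ℝⁿ with b₀ ≥ 0 entrywise, let μ, θ > 0 with r := μ/θ, define g₀ := −eₙᵀA⁻¹b₀ and g_n := −eₙᵀA⁻¹eₙ, and assume g₀ < 0. Set u* := (g₀ − r)/(g_n r) and Ā := A − u* eₙeₙᵀ. Then for all η > 0 and all k_p > 0, the (n+2)×(n+2) matrix [[Ā, 0, −k_p r eₙ], [0, −η u*, −μ k_p/u*], [eₙᵀ, −η u*, −μ k_p/u*]] is Hurwitz stable. -/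

import Mathlib

open Matrix

/-- A real square matrix is Metzler if all its off-diagonal entries are nonnegative. -/
def Metzler {m : Type*} [Fintype m] (M : Matrix m m ℝ) : Prop :=
  ∀ i j, i ≠ j → 0 ≤ M i j

/-- A real square matrix is Hurwitz stable if all its (complex) eigenvalues have
negative real part. -/
def HurwitzStable {m : Type*} [Fintype m] [DecidableEq m] (M : Matrix m m ℝ) : Prop :=
  ∀ z ∈ spectrum ℂ (M.map Complex.ofReal), z.re < 0

/-!
Let `B` be Metzler with `B - σ` invertible for all `σ ≥ 0`. The resolvent `(σ - B)⁻¹` is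
entrywise nonnegative for large `σ`, and a minimum principle keeps it so as `σ` decreases to `0`.
This yields `v > 0` with `B v < 0`, and then, for `Re z ≥ 0`, every solution of `(z - B) x = b`
satisfies `|x| ≤ (-B)⁻¹ |b|`.

Let `(x, ξ, y₀, y₁)` be an eigenvector of the closed loop for an eigenvalue `z` with `Re z ≥ 0`,
`ξ` being the output coordinate. Eliminating `x` through the Hurwitz block `B` gives
`s ξ = -k_p r y₁` with `Re s ≥ u* - σ₀`, where `σ₀ = A_nn - c B⁻¹ b = 1 / (A⁻¹)_nn` is the Schur
complement; `u* > σ₀` is exactly `g₀ < 0`. The controller rows then force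
`y₁ (s z (z + α + β) + γ (z + α)) = 0`, whose second factor does not vanish, so the eigenvector
vanishes.
-/

namespace Matrix

section

variable {ι : Type*} [Fintype ι] [DecidableEq ι]

lemma mulVec_one_pos_of_nonneg {N : Matrix ι ι ℝ} (hN : ∀ i j, 0 ≤ N i j)
    (hdet : IsUnit N.det) (i : ι) : 0 < (N *ᵥ fun _ => 1) i := by
  simp only [mulVec, dotProduct, mul_one]
  refine (Finset.sum_nonneg fun j _ => hN i j).lt_of_ne fun h => ?_
  have hrow := (Finset.sum_eq_zero_iff_of_nonneg fun j _ => hN i j).1 h.symm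
  have := congrFun (congrFun (mul_nonsing_inv N hdet) i) i
  simp [mul_apply, hrow] at this

lemma exists_pos_mulVec_eq_neg_one_of_inv_nonpos {M : Matrix ι ι ℝ} (hdet : IsUnit M.det)
    (hM : ∀ i j, M⁻¹ i j ≤ 0) : ∃ v : ι → ℝ, (∀ i, 0 < v i) ∧ M *ᵥ v = -1 := by
  refine ⟨-M⁻¹ *ᵥ fun _ => 1, mulVec_one_pos_of_nonneg (fun i j => neg_nonneg.2 (hM i j))
    (by simpa [det_neg] using hdet.inv), ?_⟩
  rw [mulVec_mulVec, mul_neg, mul_nonsing_inv _ hdet, neg_mulVec, one_mulVec]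
  rfl

lemma isClosed_setOf_inv_sub_smul_nonpos {B : Matrix ι ι ℝ} {a b : ℝ}
    (hdet : ∀ σ ∈ Set.Icc a b, IsUnit (B - σ • 1).det) :
    IsClosed ({σ : ℝ | ∀ i j, (B - σ • 1)⁻¹ i j ≤ 0} ∩ Set.Icc a b) := by
  have hcont : ContinuousOn (fun σ : ℝ => (B - σ • 1)⁻¹) (Set.Icc a b) := fun σ hσ => by
    refine ContinuousAt.continuousWithinAt (ContinuousAt.comp (f := fun σ : ℝ => B - σ • 1) ?_
      (by fun_prop))
    refine continuousAt_matrix_inv _ ?_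
    rw [Ring.inverse_eq_inv']
    exact continuousAt_inv₀ (hdet σ hσ).ne_zero
  have hclosed : IsClosed {M : Matrix ι ι ℝ | ∀ i j, M i j ≤ 0} := by
    simp only [Set.ofPred_forall]
    exact isClosed_iInter fun i => isClosed_iInter fun j =>
      isClosed_le ((continuous_apply j).comp (continuous_apply i)) continuous_const
  rw [Set.inter_comm]
  exact hcont.preimage_isClosed_of_isClosed isClosed_Icc hclosed

end

variable {R : Type*} {k : ℕ}

lemma mulVec_castSucc [NonUnitalNonAssocSemiring R] (M : Matrix (Fin (k + 1)) (Fin (k + 1)) R)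
    (x : Fin (k + 1) → R) (i : Fin k) :
    (M *ᵥ x) i.castSucc = (M.submatrix Fin.castSucc Fin.castSucc *ᵥ (x ∘ Fin.castSucc)) i +
      M i.castSucc (Fin.last k) * x (Fin.last k) := by
  simp [mulVec, dotProduct, Fin.sum_univ_castSucc]

lemma mulVec_last [NonUnitalNonAssocSemiring R] (M : Matrix (Fin (k + 1)) (Fin (k + 1)) R)
    (x : Fin (k + 1) → R) :
    (M *ᵥ x) (Fin.last k) = (fun j => M (Fin.last k) j.castSucc) ⬝ᵥ (x ∘ Fin.castSucc) +
      M (Fin.last k) (Fin.last k) * x (Fin.last k) := by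
  simp [mulVec, dotProduct, Fin.sum_univ_castSucc]

theorem inv_last_last_mul_schur [Field R] (M : Matrix (Fin (k + 1)) (Fin (k + 1)) R)
    (hM : IsUnit M.det) (hB : IsUnit (M.submatrix Fin.castSucc Fin.castSucc).det) :
    M⁻¹ (Fin.last k) (Fin.last k) * (M (Fin.last k) (Fin.last k) -
      (fun j => M (Fin.last k) j.castSucc) ⬝ᵥ
        ((M.submatrix Fin.castSucc Fin.castSucc)⁻¹ *ᵥ fun i => M i.castSucc (Fin.last k))) =
      1 := by
  set B := M.submatrix Fin.castSucc Fin.castSucc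
  set b : Fin k → R := fun i => M i.castSucc (Fin.last k)
  set w := M⁻¹ *ᵥ Pi.single (Fin.last k) 1
  have hw : M *ᵥ w = Pi.single (Fin.last k) 1 := by
    rw [mulVec_mulVec, mul_nonsing_inv _ hM, one_mulVec]
  have hB' : B *ᵥ (w ∘ Fin.castSucc) = -w (Fin.last k) • b := by
    ext i
    have := congrFun hw i.castSucc
    rw [mulVec_castSucc, Pi.single_eq_of_ne (Fin.castSucc_lt_last i).ne] at this
    simp only [Pi.smul_apply, smul_eq_mul, b]
    linear_combination this
  have hw' : w ∘ Fin.castSucc = -w (Fin.last k) • (B⁻¹ *ᵥ b) := by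
    rw [← mulVec_smul, ← hB', mulVec_mulVec, nonsing_inv_mul _ hB, one_mulVec]
  have hlast := congrFun hw (Fin.last k)
  rw [mulVec_last, hw', dotProduct_smul, Pi.single_eq_same] at hlast
  have hwℓ : w (Fin.last k) = M⁻¹ (Fin.last k) (Fin.last k) := by
    simp [w]
  rw [← hwℓ, ← hlast, smul_eq_mul]
  ring

end Matrix

theorem hurwitzStable_iff {m : Type*} [Fintype m] [DecidableEq m] {M : Matrix m m ℝ} :
    HurwitzStable M ↔
      ∀ z : ℂ, 0 ≤ z.re → ∀ w : m → ℂ, M.map Complex.ofReal *ᵥ w = z • w → w = 0 := by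
  have hmem : ∀ z : ℂ, z ∈ spectrum ℂ (M.map Complex.ofReal) ↔
      ∃ w ≠ 0, M.map Complex.ofReal *ᵥ w = z • w := fun z => by
    rw [spectrum.mem_iff, Algebra.algebraMap_eq_smul_one, isUnit_iff_isUnit_det,
      isUnit_iff_ne_zero, not_not, ← exists_mulVec_eq_zero_iff]
    simp [sub_mulVec, sub_eq_zero, eq_comm, smul_mulVec]
  simp only [HurwitzStable, hmem]
  constructor
  · intro h z hz w hw
    by_contra hw0
    exact (h z ⟨w, hw0, hw⟩).not_ge hz
  · rintro h z ⟨w, hw0, hw⟩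
    by_contra! hz
    exact hw0 (h z hz w hw)

theorem HurwitzStable.isUnit_det_sub_smul {m : Type*} [Fintype m] [DecidableEq m]
    {M : Matrix m m ℝ} (hM : HurwitzStable M) (σ : ℝ) (hσ : 0 ≤ σ) :
    IsUnit (M - σ • 1).det := by
  rw [isUnit_iff_ne_zero, Ne, ← exists_mulVec_eq_zero_iff]
  rintro ⟨x, hx0, hx⟩
  refine hx0 (funext fun i => Complex.ofReal_injective (congrFun (hurwitzStable_iff.1 hM σ
    (by simpa using hσ) (fun i => x i) ?_) i))
  rw [sub_mulVec, sub_eq_zero, smul_mulVec, one_mulVec] at hx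
  ext i
  simpa [mulVec, dotProduct] using congrArg Complex.ofReal (congrFun hx i)

namespace Metzler

variable {ι : Type*} [Fintype ι] {B : Matrix ι ι ℝ}

lemma submatrix {κ : Type*} [Fintype κ] (hB : Metzler B) {e : κ → ι}
    (he : Function.Injective e) : Metzler (B.submatrix e e) :=
  fun _ _ hij => hB _ _ (he.ne hij)

theorem nonneg_of_mulVec_nonpos (hB : Metzler B) {v x : ι → ℝ} (hv : ∀ i, 0 < v i)
    (hBv : ∀ i, (B *ᵥ v) i < 0) (hBx : ∀ i, (B *ᵥ x) i ≤ 0) (i : ι) : 0 ≤ x i := by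
  -- if `t = x k / v k` is minimal and negative, the Metzler signs give `(B x) k ≥ t (B v) k > 0`
  obtain ⟨k, -, hk⟩ :=
    Finset.exists_min_image Finset.univ (fun j => x j / v j) ⟨i, Finset.mem_univ i⟩
  set t := x k / v k
  by_contra! hxi
  have ht : t < 0 := (hk i (Finset.mem_univ i)).trans_lt (div_neg_of_neg_of_pos hxi (hv i))
  have hrow : 0 ≤ (B *ᵥ (x - t • v)) k := by
    refine Finset.sum_nonneg fun j _ => ?_
    rcases eq_or_ne k j with rfl | hkj
    · simp [t, div_mul_cancel₀ _ (hv k).ne']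
    · exact mul_nonneg (hB k j hkj)
            (sub_nonneg.2 (by simpa using (le_div_iff₀ (hv j)).1 (hk j (Finset.mem_univ j))))
  rw [mulVec_sub, mulVec_smul, Pi.sub_apply, Pi.smul_apply, smul_eq_mul] at hrow
  nlinarith [hBx k, hBv k]

variable [DecidableEq ι]

lemma sub_smul_one (hB : Metzler B) (σ : ℝ) : Metzler (B - σ • 1) := fun i j hij => by
  simpa [one_apply_ne hij] using hB i j hij

theorem isUnit_det_of_mulVec_neg (hB : Metzler B) {v : ι → ℝ} (hv : ∀ i, 0 < v i)
    (hBv : ∀ i, (B *ᵥ v) i < 0) : IsUnit B.det := by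
  rw [isUnit_iff_ne_zero, Ne, ← exists_mulVec_eq_zero_iff]
  rintro ⟨x, hx0, hx⟩
  refine hx0 (funext fun i =>
    le_antisymm ?_ (hB.nonneg_of_mulVec_nonpos hv hBv (by simp [hx]) i))
  simpa using hB.nonneg_of_mulVec_nonpos hv hBv (x := -x) (by simp [mulVec_neg, hx]) i

theorem inv_nonpos_of_mulVec_neg (hB : Metzler B) {v : ι → ℝ} (hv : ∀ i, 0 < v i)
    (hBv : ∀ i, (B *ᵥ v) i < 0) (i j : ι) : B⁻¹ i j ≤ 0 := by
  have hdet := hB.isUnit_det_of_mulVec_neg hv hBv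
  have := hB.nonneg_of_mulVec_nonpos hv hBv (x := -B⁻¹ *ᵥ Pi.single j 1) (fun k => by
    rw [mulVec_mulVec, mul_neg, mul_nonsing_inv _ hdet, neg_mulVec, one_mulVec]
    simp only [Pi.neg_apply, Pi.single_apply]
    split_ifs <;> norm_num) i
  simpa [mulVec_single_one] using this

lemma inv_sub_smul_nonpos_of_mulVec_eq (hB : Metzler B) {v : ι → ℝ} (hv : ∀ i, 0 < v i)
    {σ σ' : ℝ} (hBv : (B - σ • 1) *ᵥ v = -1) (hσ' : ∀ i, (σ - σ') * v i < 1) (i j : ι) :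
    (B - σ' • 1)⁻¹ i j ≤ 0 :=
  (hB.sub_smul_one σ').inv_nonpos_of_mulVec_neg hv (fun k => by
    have := congrFun hBv k
    simp only [sub_mulVec, smul_mulVec, one_mulVec, Pi.sub_apply, Pi.smul_apply, smul_eq_mul,
      Pi.neg_apply, Pi.one_apply] at this ⊢
    linarith [hσ' k]) i j

theorem exists_pos_mulVec_neg (hB : Metzler B)
    (hdet : ∀ σ : ℝ, 0 ≤ σ → IsUnit (B - σ • 1).det) :
    ∃ v : ι → ℝ, (∀ i, 0 < v i) ∧ ∀ i, (B *ᵥ v) i < 0 := by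
  set s := {σ : ℝ | ∀ i j, (B - σ • 1)⁻¹ i j ≤ 0}
  have hvec (σ : ℝ) (hσ : σ ∈ s) (hσ0 : 0 ≤ σ) :
      ∃ v : ι → ℝ, (∀ i, 0 < v i) ∧ (B - σ • 1) *ᵥ v = -1 :=
    exists_pos_mulVec_eq_neg_one_of_inv_nonpos (hdet σ hσ0) hσ
  set T := 1 + ∑ i, ∑ j, |B i j|
  have hT : T ∈ s := (hB.sub_smul_one T).inv_nonpos_of_mulVec_neg (v := fun _ => 1)
    (fun _ => one_pos) fun i => by
      have hrow : ∑ j, B i j ≤ ∑ i, ∑ j, |B i j| :=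
        (Finset.sum_le_sum fun j _ => le_abs_self _).trans
          (Finset.single_le_sum (f := fun i => ∑ j, |B i j|)
            (fun i _ => Finset.sum_nonneg fun j _ => abs_nonneg _) (Finset.mem_univ i))
      rw [sub_mulVec, smul_mulVec, one_mulVec]
      simp only [Pi.sub_apply, Pi.smul_apply, smul_eq_mul, mulVec, dotProduct, mul_one, T]
      linarith
  have hstep : ∀ σ ∈ s ∩ Set.Ioc 0 T, ∀ y ∈ Set.Iio σ, (s ∩ Set.Ico y σ).Nonempty := by
    rintro σ ⟨hσ, hσ0, -⟩ y hy
    obtain ⟨v, hv, hBv⟩ := hvec σ hσ hσ0.le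
    have hsum : 0 ≤ ∑ i, v i := Finset.sum_nonneg fun i _ => (hv i).le
    set δ := (1 + ∑ i, v i)⁻¹
    have hδ : 0 < δ := inv_pos.2 (by linarith)
    refine ⟨max y (σ - δ), hB.inv_sub_smul_nonpos_of_mulVec_eq hv hBv fun i => ?_,
      le_max_left _ _, max_lt hy (by linarith)⟩
    calc (σ - max y (σ - δ)) * v i ≤ δ * v i :=
          mul_le_mul_of_nonneg_right (by linarith [le_max_right y (σ - δ)]) (hv i).le
      _ < 1 := by
          rw [inv_mul_lt_iff₀ (by linarith), mul_one]
          linarith [Finset.single_le_sum (fun i _ => (hv i).le) (Finset.mem_univ i)]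
  have h0 : (0 : ℝ) ∈ s :=
    (isClosed_setOf_inv_sub_smul_nonpos fun σ hσ => hdet σ hσ.1).Icc_subset_of_forall_exists_lt
      hT hstep ⟨le_rfl, by positivity⟩
  obtain ⟨v, hv, hBv⟩ := hvec 0 h0 le_rfl
  exact ⟨v, hv, fun i => by simpa using (congrFun hBv i).trans_lt neg_one_lt_zero⟩

lemma neg_mulVec_norm_le (hB : Metzler B) {z : ℂ} (hz : 0 ≤ z.re) (x : ι → ℂ) (k : ι) :
    -(B *ᵥ fun j => ‖x j‖) k ≤ ‖(z • x - B.map Complex.ofReal *ᵥ x) k‖ := by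
  set S := ∑ j ∈ Finset.univ.erase k, (B k j : ℂ) * x j
  have hS : ‖S‖ ≤ ∑ j ∈ Finset.univ.erase k, B k j * ‖x j‖ :=
    (norm_sum_le _ _).trans_eq (Finset.sum_congr rfl fun j hj => by
      rw [norm_mul, Complex.norm_real,
        Real.norm_of_nonneg (hB k j (Finset.ne_of_mem_erase hj).symm)])
  have hdiag : -B k k * ‖x k‖ ≤ ‖(z - B k k) * x k‖ := by
    rw [norm_mul]
    refine mul_le_mul_of_nonneg_right ?_ (norm_nonneg _)
    have := Complex.re_le_norm (z - B k k)
    simp only [Complex.sub_re, Complex.ofReal_re] at this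
    linarith
  have hrow : (z • x - B.map Complex.ofReal *ᵥ x) k = (z - B k k) * x k - S := by
    simp only [Pi.sub_apply, Pi.smul_apply, smul_eq_mul, mulVec, dotProduct, map_apply,
      ← Finset.add_sum_erase _ _ (Finset.mem_univ k), S]
    ring
  have hrowR : (B *ᵥ fun j => ‖x j‖) k =
      B k k * ‖x k‖ + ∑ j ∈ Finset.univ.erase k, B k j * ‖x j‖ := by
    simp only [mulVec, dotProduct, ← Finset.add_sum_erase _ _ (Finset.mem_univ k)]
  rw [hrow, hrowR]
  linarith [norm_sub_norm_le ((z - B k k) * x k) S]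

theorem norm_le_of_smul_sub_mulVec_eq (hB : Metzler B) {v : ι → ℝ} (hv : ∀ i, 0 < v i)
    (hBv : ∀ i, (B *ᵥ v) i < 0) {z : ℂ} (hz : 0 ≤ z.re) {x b : ι → ℂ}
    (hx : z • x - B.map Complex.ofReal *ᵥ x = b) (i : ι) :
    ‖x i‖ ≤ (-B⁻¹ *ᵥ fun j => ‖b j‖) i := by
  have hdet := hB.isUnit_det_of_mulVec_neg hv hBv
  have := hB.nonneg_of_mulVec_nonpos hv hBv
    (x := (-B⁻¹ *ᵥ fun j => ‖b j‖) - fun j => ‖x j‖) (fun k => by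
      rw [mulVec_sub, mulVec_mulVec, mul_neg, mul_nonsing_inv _ hdet, neg_mulVec, one_mulVec]
      have := hB.neg_mulVec_norm_le hz x k
      rw [hx] at this
      simp only [Pi.sub_apply, Pi.neg_apply]
      linarith) i
  simpa using this

lemma dotProduct_inv_mulVec_nonpos (hB : Metzler B) {v : ι → ℝ} (hv : ∀ i, 0 < v i)
    (hBv : ∀ i, (B *ᵥ v) i < 0) {b c : ι → ℝ} (hb : ∀ i, 0 ≤ b i) (hc : ∀ i, 0 ≤ c i) :
    c ⬝ᵥ (B⁻¹ *ᵥ b) ≤ 0 :=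
  Finset.sum_nonpos fun i _ => mul_nonpos_of_nonneg_of_nonpos (hc i)
    (Finset.sum_nonpos fun j _ =>
      mul_nonpos_of_nonpos_of_nonneg (hB.inv_nonpos_of_mulVec_neg hv hBv i j) (hb j))

theorem norm_dotProduct_le (hB : Metzler B) {v : ι → ℝ} (hv : ∀ i, 0 < v i)
    (hBv : ∀ i, (B *ᵥ v) i < 0) {z : ℂ} (hz : 0 ≤ z.re) {b c : ι → ℝ} (hb : ∀ i, 0 ≤ b i)
    (hc : ∀ i, 0 ≤ c i) {x : ι → ℂ} {ξ : ℂ}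
    (hx : z • x - B.map Complex.ofReal *ᵥ x = fun i => (b i : ℂ) * ξ) :
    ‖(fun i => (c i : ℂ)) ⬝ᵥ x‖ ≤ -(c ⬝ᵥ (B⁻¹ *ᵥ b)) * ‖ξ‖ := by
  have hnorm : (fun i => ‖(b i : ℂ) * ξ‖) = ‖ξ‖ • b := by
    ext i
    simp [Complex.norm_real, Real.norm_of_nonneg (hb i), mul_comm]
  calc ‖(fun i => (c i : ℂ)) ⬝ᵥ x‖ ≤ ∑ i, c i * ‖x i‖ :=
        (norm_sum_le _ _).trans_eq (Finset.sum_congr rfl fun i _ => by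
          rw [norm_mul, Complex.norm_real, Real.norm_of_nonneg (hc i)])
    _ ≤ ∑ i, c i * (-B⁻¹ *ᵥ ‖ξ‖ • b) i := Finset.sum_le_sum fun i _ =>
        mul_le_mul_of_nonneg_left (hnorm ▸ hB.norm_le_of_smul_sub_mulVec_eq hv hBv hz hx i) (hc i)
    _ = -(c ⬝ᵥ (B⁻¹ *ᵥ b)) * ‖ξ‖ := by
        rw [mulVec_smul, neg_mulVec, ← dotProduct_neg, dotProduct, Finset.sum_mul]
        exact Finset.sum_congr rfl fun i _ => by simp only [Pi.smul_apply, smul_eq_mul]; ring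

theorem exists_dotProduct_eq_mul (hB : Metzler B) {v : ι → ℝ} (hv : ∀ i, 0 < v i)
    (hBv : ∀ i, (B *ᵥ v) i < 0) {z : ℂ} (hz : 0 ≤ z.re) {b c : ι → ℝ} (hb : ∀ i, 0 ≤ b i)
    (hc : ∀ i, 0 ≤ c i) {x : ι → ℂ} {ξ : ℂ}
    (hx : z • x - B.map Complex.ofReal *ᵥ x = fun i => (b i : ℂ) * ξ) :
    ∃ t : ℂ, ‖t‖ ≤ -(c ⬝ᵥ (B⁻¹ *ᵥ b)) ∧ (fun i => (c i : ℂ)) ⬝ᵥ x = t * ξ := by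
  have hcx := hB.norm_dotProduct_le hv hBv hz hb hc hx
  rcases eq_or_ne ξ 0 with hξ | hξ
  · exact ⟨0, by simpa using hB.dotProduct_inv_mulVec_nonpos hv hBv hb hc,
      by simpa [hξ] using hcx⟩
  · refine ⟨(fun i => (c i : ℂ)) ⬝ᵥ x / ξ, ?_, (div_mul_cancel₀ _ hξ).symm⟩
    rw [norm_div]
    exact div_le_of_le_mul₀ (norm_nonneg _)
      (by linarith [hB.dotProduct_inv_mulVec_nonpos hv hBv hb hc]) hcx

end Metzler

lemma closedLoop_scalar_ne_zero {z s : ℂ} {α β γ : ℝ} (hz : 0 ≤ z.re) (hs : 0 < s.re)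
    (hα : 0 < α) (hβ : 0 ≤ β) (hγ : 0 < γ) :
    s * z * (z + α + β) + γ * (z + α) ≠ 0 := by
  have hzα : z + α ≠ 0 := fun h => by
    have := congrArg Complex.re h
    simp at this
    linarith
  have hs0 : s ≠ 0 := fun h => by simp [h] at hs
  -- after dividing by `s (z + α)`, each term has nonnegative real part and `γ / s` a positive one
  have hF : 0 < (z + β * (z / (z + α)) + γ / s).re := by
    have h1 : 0 ≤ (z / (z + α)).re := by
      rw [Complex.div_re]
      simp only [Complex.add_re, Complex.ofReal_re, Complex.add_im, Complex.ofReal_im, add_zero]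
      have hN := Complex.normSq_nonneg (z + α)
      exact add_nonneg (div_nonneg (mul_nonneg hz (by linarith)) hN)
        (div_nonneg (mul_self_nonneg _) hN)
    have h2 : 0 < ((γ : ℂ) / s).re := by
      rw [Complex.div_re]
      simp only [Complex.ofReal_re, Complex.ofReal_im, zero_mul, zero_div, add_zero]
      have := Complex.normSq_pos.2 hs0
      positivity
    simp only [Complex.add_re, Complex.re_ofReal_mul]
    nlinarith
  have : s * z * (z + α + β) + γ * (z + α) =
      s * (z + α) * (z + β * (z / (z + α)) + γ / s) := by
    field_simp
  rw [this]
  exact mul_ne_zero (mul_ne_zero hs0 hzα) fun h => by simp [h] at hF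

lemma closedLoop_scalar_eq_zero {z s ξ y₀ y₁ : ℂ} {α β γ : ℝ} (hz : 0 ≤ z.re) (hs : 0 < s.re)
    (hα : 0 < α) (hβ : 0 ≤ β) (hγ : 0 < γ) (hξ : s * ξ = -γ * y₁)
    (hy₀ : z * y₀ = -α * y₀ - β * y₁) (hy₁ : z * y₁ = ξ - α * y₀ - β * y₁) :
    ξ = 0 ∧ y₀ = 0 ∧ y₁ = 0 := by
  have hy₁0 : y₁ = 0 := by
    refine (mul_eq_zero.1 ?_).resolve_right (closedLoop_scalar_ne_zero hz hs hα hβ hγ)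
    linear_combination (z + α) * hξ + s * (z + α) * hy₁ - s * α * hy₀
  have hξ0 : ξ = 0 := by
    refine (mul_eq_zero.1 ?_).resolve_left fun (h : s = 0) => by
      rw [h, Complex.zero_re] at hs
      exact hs.false
    linear_combination hξ - γ * hy₁0
  refine ⟨hξ0, (mul_eq_zero.1 ?_).resolve_left (Complex.ofReal_ne_zero.2 hα.ne'), hy₁0⟩
  linear_combination hy₁ - (z + β) * hy₁0 + hξ0

section ClosedLoop

variable {n : ℕ}

/-- The Jacobian of the theorem, with `γ = k_p r`, `α = η u` and `β = μ k_p / u`. -/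
def closedLoop (A : Matrix (Fin (n + 2)) (Fin (n + 2)) ℝ) (u γ α β : ℝ) :
    Matrix (Fin (n + 2) ⊕ Fin 2) (Fin (n + 2) ⊕ Fin 2) ℝ :=
  fromBlocks
    (A - u • vecMulVec (Pi.single (Fin.last (n + 1)) 1) (Pi.single (Fin.last (n + 1)) 1))
    (of fun (i : Fin (n + 2)) (j : Fin 2) =>
      if j = 1 then -γ * (Pi.single (Fin.last (n + 1)) 1 : Fin (n + 2) → ℝ) i else 0)
    (of fun (i : Fin 2) (j : Fin (n + 2)) =>
      if i = 1 then (Pi.single (Fin.last (n + 1)) 1 : Fin (n + 2) → ℝ) j else 0)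
    !![-α, -β; -α, -β]

variable {A : Matrix (Fin (n + 2)) (Fin (n + 2)) ℝ} {u γ α β : ℝ} {z : ℂ}
  {w : Fin (n + 2) ⊕ Fin 2 → ℂ}

lemma closedLoop_mulVec_inl (i : Fin (n + 2)) :
    ((closedLoop A u γ α β).map Complex.ofReal *ᵥ w) (.inl i) =
      (A.map Complex.ofReal *ᵥ (w ∘ .inl)) i -
        if i = Fin.last (n + 1) then u * w (.inl i) + γ * w (.inr 1) else 0 := by
  simp only [closedLoop, fromBlocks_map, fromBlocks_mulVec, Sum.elim_inl, Pi.add_apply]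
  split_ifs with hi
  · subst hi
    simp [mulVec, dotProduct, sub_mul, Finset.sum_sub_distrib, vecMulVec_apply, Pi.single_apply,
      apply_ite Complex.ofReal, ite_mul]
    ring
  · simp [mulVec, dotProduct, vecMulVec_apply, Pi.single_apply, hi]

lemma closedLoop_mulVec_inr_zero :
    ((closedLoop A u γ α β).map Complex.ofReal *ᵥ w) (.inr 0) =
      -α * w (.inr 0) - β * w (.inr 1) := by
  simp [closedLoop, mulVec, dotProduct]
  ring

lemma closedLoop_mulVec_inr_one :
    ((closedLoop A u γ α β).map Complex.ofReal *ᵥ w) (.inr 1) =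
      w (.inl (Fin.last (n + 1))) - α * w (.inr 0) - β * w (.inr 1) := by
  simp [closedLoop, mulVec, dotProduct, Pi.single_apply, apply_ite Complex.ofReal, ite_mul]
  ring

lemma closedLoop_eigen (hw : (closedLoop A u γ α β).map Complex.ofReal *ᵥ w = z • w) :
    (z • (fun i => w (.inl i.castSucc)) - (A.submatrix Fin.castSucc Fin.castSucc).map
        Complex.ofReal *ᵥ (fun i => w (.inl i.castSucc)) =
      fun i => (A i.castSucc (Fin.last (n + 1)) : ℂ) * w (.inl (Fin.last (n + 1)))) ∧
    z * w (.inl (Fin.last (n + 1))) =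
      (fun j : Fin (n + 1) => (A (Fin.last (n + 1)) j.castSucc : ℂ)) ⬝ᵥ
          (fun i : Fin (n + 1) => w (.inl i.castSucc)) +
        (A (Fin.last (n + 1)) (Fin.last (n + 1)) - u) * w (.inl (Fin.last (n + 1))) -
        γ * w (.inr 1) ∧
    z * w (.inr 0) = -α * w (.inr 0) - β * w (.inr 1) ∧
    z * w (.inr 1) = w (.inl (Fin.last (n + 1))) - α * w (.inr 0) - β * w (.inr 1) := by
  refine ⟨funext fun i => ?_, ?_, ?_, ?_⟩
  · have := congrFun hw (.inl i.castSucc)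
    rw [closedLoop_mulVec_inl, if_neg (Fin.castSucc_lt_last i).ne, sub_zero, mulVec_castSucc,
      submatrix_map] at this
    simp only [Pi.sub_apply, Pi.smul_apply, smul_eq_mul, map_apply, Function.comp_def] at this ⊢
    linear_combination -this
  · have := congrFun hw (.inl (Fin.last (n + 1)))
    rw [closedLoop_mulVec_inl, if_pos rfl, mulVec_last] at this
    simp only [Pi.smul_apply, smul_eq_mul, map_apply, Function.comp_def] at this
    linear_combination -this
  · simpa [closedLoop_mulVec_inr_zero] using (congrFun hw (.inr 0)).symm
  · simpa [closedLoop_mulVec_inr_one] using (congrFun hw (.inr 1)).symm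

theorem hurwitzStable_closedLoop (hA : Metzler A) {v : Fin (n + 1) → ℝ} (hv : ∀ i, 0 < v i)
    (hBv : ∀ i, (A.submatrix Fin.castSucc Fin.castSucc *ᵥ v) i < 0)
    (hu : A (Fin.last (n + 1)) (Fin.last (n + 1)) -
      (fun j => A (Fin.last (n + 1)) j.castSucc) ⬝ᵥ
        ((A.submatrix Fin.castSucc Fin.castSucc)⁻¹ *ᵥ fun i => A i.castSucc (Fin.last (n + 1))) <
      u)
    (hα : 0 < α) (hβ : 0 ≤ β) (hγ : 0 < γ) : HurwitzStable (closedLoop A u γ α β) := by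
  rw [hurwitzStable_iff]
  intro z hz w hw
  obtain ⟨hx, hξ, hy₀, hy₁⟩ := closedLoop_eigen hw
  set ℓ := Fin.last (n + 1)
  set B := A.submatrix Fin.castSucc Fin.castSucc
  set b : Fin (n + 1) → ℝ := fun i => A i.castSucc ℓ
  set c : Fin (n + 1) → ℝ := fun j => A ℓ j.castSucc
  set x : Fin (n + 1) → ℂ := fun i => w (.inl i.castSucc)
  set ξ := w (.inl ℓ)
  have hB : Metzler B := hA.submatrix (Fin.castSucc_injective _)
  have hb : ∀ i, 0 ≤ b i := fun i => hA _ _ (Fin.castSucc_lt_last i).ne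
  have hc : ∀ j, 0 ≤ c j := fun j => hA _ _ (Fin.castSucc_lt_last j).ne'
  obtain ⟨t, ht, hct⟩ := hB.exists_dotProduct_eq_mul hv hBv hz hb hc hx
  set s := z - A ℓ ℓ + u - t
  have hs : 0 < s.re := by
    have := Complex.re_le_norm t
    simp only [s, Complex.sub_re, Complex.add_re, Complex.ofReal_re]
    linarith
  obtain ⟨hξ0, hy₀0, hy₁0⟩ := closedLoop_scalar_eq_zero hz hs hα hβ hγ
    (by linear_combination hξ + hct) hy₀ hy₁
  have hx0 (i : Fin (n + 1)) : x i = 0 := by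
    simpa [hξ0, mulVec, dotProduct] using hB.norm_le_of_smul_sub_mulVec_eq hv hBv hz hx i
  funext j
  rcases j with j | j
  · induction j using Fin.lastCases with
    | last => exact hξ0
    | cast i => exact hx0 i
  · fin_cases j
    · exact hy₀0
    · exact hy₁0

end ClosedLoop

theorem stmt15_general (n : ℕ) (A : Matrix (Fin (n+2)) (Fin (n+2)) ℝ)
    (hMetz : Metzler A) (hInv : IsUnit A.det)
    (h11 : HurwitzStable (A.submatrix Fin.castSucc Fin.castSucc))
    (hnn : 0 < A (Fin.last (n+1)) (Fin.last (n+1)))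
    (μ θ r g₀ gn u : ℝ) (hμ : 0 < μ) (hθ : 0 < θ) (hr : r = μ / θ)
    (hgn : gn = -(A⁻¹ (Fin.last (n+1)) (Fin.last (n+1))))
    (hg₀neg : g₀ < 0) (hu : u = (g₀ - r) / (gn * r)) :
    ∀ η kp : ℝ, 0 < η → 0 < kp →
      HurwitzStable (Matrix.fromBlocks
        (A - u • Matrix.vecMulVec
          (Pi.single (Fin.last (n+1)) 1) (Pi.single (Fin.last (n+1)) 1))
        (Matrix.of fun (i : Fin (n+2)) (j : Fin 2) =>
          if j = 1 then -(kp * r) * (Pi.single (Fin.last (n+1)) 1 : Fin (n+2) → ℝ) i else 0)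
        (Matrix.of fun (i : Fin 2) (j : Fin (n+2)) =>
          if i = 1 then (Pi.single (Fin.last (n+1)) 1 : Fin (n+2) → ℝ) j else 0)
        !![-(η * u), -(μ * kp / u); -(η * u), -(μ * kp / u)]) := by
  intro η kp hη hkp
  have hB := hMetz.submatrix (Fin.castSucc_injective (n + 1))
  obtain ⟨v, hv, hBv⟩ := hB.exists_pos_mulVec_neg h11.isUnit_det_sub_smul
  set σ₀ := A (Fin.last (n + 1)) (Fin.last (n + 1)) -
    (fun j => A (Fin.last (n + 1)) j.castSucc) ⬝ᵥ
      ((A.submatrix Fin.castSucc Fin.castSucc)⁻¹ *ᵥ fun i => A i.castSucc (Fin.last (n + 1)))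
  have hσ₀ : 0 < σ₀ := by
    linarith [hB.dotProduct_inv_mulVec_nonpos hv hBv
      (fun i => hMetz _ _ (Fin.castSucc_lt_last i).ne)
      (fun j => hMetz _ _ (Fin.castSucc_lt_last j).ne')]
  have hgnσ₀ : gn * σ₀ = -1 := by
    rw [hgn, neg_mul, inv_last_last_mul_schur A hInv (hB.isUnit_det_of_mulVec_neg hv hBv)]
  have hr₀ : 0 < r := hr ▸ div_pos hμ hθ
  have hσ₀u : σ₀ < u := by
    have hgn₀ : gn < 0 := by nlinarith
    rw [hu, lt_div_iff_of_neg (mul_neg_of_neg_of_pos hgn₀ hr₀)]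
    have : σ₀ * (gn * r) = -r := by linear_combination r * hgnσ₀
    linarith
  exact hurwitzStable_closedLoop hMetz hv hBv hσ₀u (mul_pos hη (hσ₀.trans hσ₀u))
    (div_nonneg (mul_nonneg hμ.le hkp.le) (hσ₀.trans hσ₀u).le) (mul_pos hkp hr₀)

/-- Theorem 4 of the paper (structural stability, output unstable case): for a Metzler,
invertible, output unstable matrix A with g₀ < 0, the closed-loop Jacobian of the p-type
AIC is Hurwitz stable for all controller parameters η, k_p > 0. -/
theorem stmt15 (n : ℕ) (A : Matrix (Fin (n+2)) (Fin (n+2)) ℝ)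
    (hMetz : Metzler A) (hInv : IsUnit A.det)
    (h11 : HurwitzStable (A.submatrix Fin.castSucc Fin.castSucc))
    (hnn : 0 < A (Fin.last (n+1)) (Fin.last (n+1)))
    (b₀ : Fin (n+2) → ℝ) (hb₀ : ∀ i, 0 ≤ b₀ i)
    (μ θ r g₀ gn u : ℝ) (hμ : 0 < μ) (hθ : 0 < θ) (hr : r = μ / θ)
    (hg₀ : g₀ = -((A⁻¹ *ᵥ b₀) (Fin.last (n+1))))
    (hgn : gn = -(A⁻¹ (Fin.last (n+1)) (Fin.last (n+1))))
    (hg₀neg : g₀ < 0) (hu : u = (g₀ - r) / (gn * r)) :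
    ∀ η kp : ℝ, 0 < η → 0 < kp →
      HurwitzStable (Matrix.fromBlocks
        (A - u • Matrix.vecMulVec
          (Pi.single (Fin.last (n+1)) 1) (Pi.single (Fin.last (n+1)) 1))
        (Matrix.of fun (i : Fin (n+2)) (j : Fin 2) =>
          if j = 1 then -(kp * r) * (Pi.single (Fin.last (n+1)) 1 : Fin (n+2) → ℝ) i else 0)
        (Matrix.of fun (i : Fin 2) (j : Fin (n+2)) =>
          if i = 1 then (Pi.single (Fin.last (n+1)) 1 : Fin (n+2) → ℝ) j else 0)
        !![-(η * u), -(μ * kp / u); -(η * u), -(μ * kp / u)]) :=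
  stmt15_general n A hMetz hInv h11 hnn μ θ r g₀ gn u hμ hθ hr hgn hg₀neg hu
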